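/- If a, b ∈ {0, ..., 2^k - 1} satisfy C(a,2) ≡ C(b,2) (mod 2^(k-1)) and a, b have different parities, then a + b ≡ 1 (mod 2^k). -/
import Mathlib

lemma two_mul_choose_two (n : ℕ) : 2 * n.choose 2 = n * (n - 1) := by
  cases n with
  | zero => simp
  | succ m =>
    rw [Nat.choose_two_right]
    rw [Nat.mul_div_cancel']
    have : Even ((m + 1) * m) := by
      rcases Nat.even_or_odd m with h | h
      · exact h.mul_left _
      · exact (Odd.add_one h).mul_right _
    simpa using this.two_dvd

lemma int_two_mul_choose_two (n : ℕ) : (2:ℤ) * n.choose 2 = (n:ℤ) * ((n:ℤ) - 1) := by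
  cases n with
  | zero => simp
  | succ m =>
    have h : 2 * (m + 1).choose 2 = (m + 1) * m := by
      simpa using two_mul_choose_two (m + 1)
    have h2 : ((2 * (m + 1).choose 2 : ℕ) : ℤ) = (((m + 1) * m : ℕ) : ℤ) := by
      exact_mod_cast congrArg (Nat.cast : ℕ → ℤ) h
    push_cast at h2
    push_cast
    linear_combination h2

theorem stmt_4 (k : ℕ) (hk : 1 ≤ k) (a b : ℕ) (ha : a < 2 ^ k) (hb : b < 2 ^ k)
    (hcong : a.choose 2 ≡ b.choose 2 [MOD 2 ^ (k - 1)])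
    (hpar : a % 2 ≠ b % 2) : a + b ≡ 1 [MOD 2 ^ k] := by
  have h1 : ((2:ℤ) ^ (k - 1)) ∣ (b.choose 2 : ℤ) - (a.choose 2 : ℤ) := by
    have := hcong.dvd
    exact_mod_cast this
  have h2 : ((2:ℤ) ^ k) ∣ ((b:ℤ) - a) * ((a:ℤ) + b - 1) := by
    have hk' : (2:ℤ) ^ k = 2 * 2 ^ (k - 1) := by
      rw [← pow_succ']
      congr 1
      omega
    rw [hk']
    obtain ⟨c, hc⟩ := h1
    refine ⟨c, ?_⟩
    have hb2 := int_two_mul_choose_two b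
    have ha2 := int_two_mul_choose_two a
    linear_combination 2 * hc - hb2 + ha2
  -- b - a is odd, so 2^k divides a + b - 1
  have hodd : ¬ (2:ℤ) ∣ ((b:ℤ) - a) := by
    intro ⟨c, hc⟩
    apply hpar
    omega
  have hcop : IsCoprime ((2:ℤ) ^ k) ((b:ℤ) - a) :=
    (IsCoprime.pow_left ((Int.prime_two.coprime_iff_not_dvd).mpr hodd))
  have h3 : ((2:ℤ) ^ k) ∣ ((a:ℤ) + b - 1) := hcop.dvd_of_dvd_mul_left h2
  -- bounds
  have hab1 : 1 ≤ a + b := by omega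
  have h4 : (2 ^ k : ℕ) ∣ a + b - 1 := by
    have : ((2 ^ k : ℕ) : ℤ) ∣ ((a + b - 1 : ℕ) : ℤ) := by
      push_cast [hab1]
      exact_mod_cast h3
    exact_mod_cast this
  obtain ⟨c, hc⟩ := h4
  have hclt : c < 2 := by
    by_contra h
    push_neg at h
    have : 2 ^ k * 2 ≤ 2 ^ k * c := Nat.mul_le_mul_left _ h
    omega
  interval_cases c
  · have : a + b = 1 := by omega
    rw [this]
  · have : a + b = 2 ^ k + 1 := by omega
    rw [this]
    exact Nat.add_mod_left _ _
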